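/- arXiv:math/0509215 — 5 statements merged into one kernel-verified Lean document; each statement's English description precedes it below -/
import Mathlib

section
/- Let p, q ∈ ℝ⁴ satisfy p₄ = q₄ = 0, p₃ > 0, q₃ > 0. Set r = p₃/√2 and R = q₃/√2, and assume dist(p,q)² = r² + R² (i.e. the spheres S(p,r) and S(q,R) are orthogonal). Then dist(p, R_{π/3}(q)) = r + R; that is, the sphere S(p,r) and the rotated sphere S(R_{π/3}(q), R) are externally tangent. -/
/-- The spinning rotation `R_θ` on points of `ℝ⁴` (with fourth coordinate zero):
`R_θ(x) = (x₁, x₂, x₃·cos θ, x₃·sin θ)`. -/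
noncomputable def spinRot (θ : ℝ) (x : EuclideanSpace ℝ (Fin 4)) : EuclideanSpace ℝ (Fin 4) :=
  (WithLp.equiv 2 (Fin 4 → ℝ)).symm ![x 0, x 1, x 2 * Real.cos θ, x 2 * Real.sin θ]

/-- If the spheres `S(p, p₃/√2)` and `S(q, q₃/√2)` are orthogonal, then the sphere `S(p, r)` and
the rotated sphere `S(R_{π/3}(q), R)` are externally tangent: `dist(p, R_{π/3}(q)) = r + R`. -/
theorem dist_center_rotated_center (p q : EuclideanSpace ℝ (Fin 4))
    (hp4 : p 3 = 0) (hq4 : q 3 = 0) (hp3 : 0 < p 2) (hq3 : 0 < q 2)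
    (r R : ℝ) (hr : r = p 2 / Real.sqrt 2) (hR : R = q 2 / Real.sqrt 2)
    (horth : dist p q ^ 2 = r ^ 2 + R ^ 2) :
    dist p (spinRot (Real.pi / 3) q) = r + R := by
  have h2 : (Real.sqrt 2) ^ 2 = 2 := Real.sq_sqrt (by norm_num)
  have h2pos : (0:ℝ) < Real.sqrt 2 := Real.sqrt_pos.mpr (by norm_num)
  have hdq : dist p q ^ 2 = (p 0 - q 0)^2 + (p 1 - q 1)^2 + (p 2 - q 2)^2 := by
    rw [EuclideanSpace.dist_eq, Real.sq_sqrt (by positivity)]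
    simp [Fin.sum_univ_four, hp4, hq4, Real.dist_eq, sq_abs]
  have hcos : Real.cos (Real.pi / 3) = 1/2 := Real.cos_pi_div_three
  have hsin : Real.sin (Real.pi / 3) = Real.sqrt 3 / 2 := Real.sin_pi_div_three
  have h3 : (Real.sqrt 3) ^ 2 = 3 := Real.sq_sqrt (by norm_num)
  have hd2 : dist p (spinRot (Real.pi / 3) q) ^ 2 =
      (p 0 - q 0)^2 + (p 1 - q 1)^2 + (p 2 - q 2 * (1/2))^2 + (q 2 * (Real.sqrt 3 / 2))^2 := by
    rw [EuclideanSpace.dist_eq, Real.sq_sqrt (by positivity)]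
    simp [Fin.sum_univ_four, spinRot, hp4, hcos, hsin, Real.dist_eq, sq_abs]
  have key : dist p (spinRot (Real.pi / 3) q) ^ 2 = (r + R) ^ 2 := by
    rw [hd2]
    have hA : (p 0 - q 0)^2 + (p 1 - q 1)^2
        = r ^ 2 + R ^ 2 - (p 2 - q 2)^2 := by linarith [hdq, horth]
    rw [hA, hr, hR]
    field_simp
    nlinarith [h2, h3]
  have h1 : 0 ≤ dist p (spinRot (Real.pi / 3) q) := dist_nonneg
  have h2' : 0 ≤ r + R := by
    rw [hr, hR]; positivity
  rw [← Real.sqrt_sq h1, key, Real.sqrt_sq h2']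
end

section
/- Let p, q ∈ ℝ⁴ satisfy p₄ = q₄ = 0, p₃ > 0, q₃ > 0. Set r = p₃/√2 and R = q₃/√2, and assume dist(p,q)² = r² + R². Then the intersection of the metric spheres S(p,r) and S(R_{π/3}(q), R) is exactly the single point (R/(r+R)) • p + (r/(r+R)) • R_{π/3}(q). -/
/-!
Rotating `q` by `θ` in the `(x₃, x₄)`-plane moves it away from `p` by
`dist p (R_θ q)² = dist p q² + 2 p₃ q₃ (1 - cos θ)`. For `θ = π/3` and `p₃ q₃ = 2 r R` the
orthogonality `dist p q² = r² + R²` becomes `dist p (R_θ q) = r + R`: the two spheres are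
externally tangent, and in a strictly convex space such spheres meet only at the point dividing
the segment of centres in the ratio `r : R`.
-/

open Metric AffineMap

section TangentSpheres

variable {V P : Type*} [NormedAddCommGroup V] [NormedSpace ℝ V] [MetricSpace P]
  [NormedAddTorsor V P] {a b x : P} {r R : ℝ}

theorem lineMap_mem_sphere_inter_sphere (hr : 0 ≤ r) (hR : 0 ≤ R) (hd : dist a b = r + R) :
    lineMap a b (r / (r + R)) ∈ sphere a r ∩ sphere b R := by
  rcases eq_or_ne (r + R) 0 with h0 | h0
  · obtain ⟨rfl, rfl⟩ : r = 0 ∧ R = 0 := ⟨by linarith, by linarith⟩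
    simpa using hd
  · have ht : 0 ≤ r / (r + R) := by positivity
    have hs : 1 - r / (r + R) = R / (r + R) := by rw [one_sub_div h0, add_sub_cancel_left]
    constructor
    · rw [mem_sphere, dist_lineMap_left, hd, Real.norm_of_nonneg ht, div_mul_cancel₀ _ h0]
    · rw [mem_sphere, dist_lineMap_right, hd, hs, Real.norm_of_nonneg (by positivity),
        div_mul_cancel₀ _ h0]

variable [StrictConvexSpace ℝ V]

theorem eq_lineMap_of_mem_sphere_inter_sphere (hd : dist a b = r + R)
    (hx : x ∈ sphere a r ∩ sphere b R) : x = lineMap a b (r / (r + R)) := by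
  obtain ⟨hxa, hxb⟩ : dist x a = r ∧ dist x b = R := hx
  by_cases h0 : r + R = 0
  · have hr0 : r = 0 := by linarith [dist_nonneg (x := x) (y := a), dist_nonneg (x := x) (y := b)]
    rw [h0, div_zero, lineMap_apply_zero, ← dist_eq_zero, hxa, hr0]
  · apply eq_lineMap_of_dist_eq_mul_of_dist_eq_mul
    · rw [dist_comm, hxa, hd, div_mul_cancel₀ _ h0]
    · rw [hxb, hd, one_sub_div h0, add_sub_cancel_left, div_mul_cancel₀ _ h0]

theorem sphere_inter_sphere_eq_singleton_of_dist_eq_add (hr : 0 ≤ r) (hR : 0 ≤ R)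
    (hd : dist a b = r + R) : sphere a r ∩ sphere b R = {lineMap a b (r / (r + R))} :=
  Set.eq_singleton_iff_unique_mem.2 ⟨lineMap_mem_sphere_inter_sphere hr hR hd,
    fun _ hx ↦ eq_lineMap_of_mem_sphere_inter_sphere hd hx⟩

end TangentSpheres

theorem dist_spinRot_sq {p q : EuclideanSpace ℝ (Fin 4)} (hp : p 3 = 0) (hq : q 3 = 0) (θ : ℝ) :
    dist p (spinRot θ q) ^ 2 = dist p q ^ 2 + 2 * p 2 * q 2 * (1 - Real.cos θ) := by
  simp only [EuclideanSpace.dist_eq, Real.dist_eq, sq_abs]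
  rw [Real.sq_sqrt (by positivity), Real.sq_sqrt (by positivity)]
  simp only [spinRot, WithLp.equiv_symm_apply, Fin.sum_univ_four, Matrix.cons_val_zero,
    Matrix.cons_val_one, Matrix.cons_val, hp, hq]
  linear_combination q 2 ^ 2 * Real.sin_sq_add_cos_sq θ

/-- If the spheres `S(p, p₃/√2)` and `S(q, q₃/√2)` are orthogonal, then the sphere `S(p, r)` and
the rotated sphere `S(R_{π/3}(q), R)` intersect in exactly the single point
`(R/(r+R)) • p + (r/(r+R)) • R_{π/3}(q)`. -/
theorem sphere_inter_rotated_sphere_eq_singleton (p q : EuclideanSpace ℝ (Fin 4))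
    (hp4 : p 3 = 0) (hq4 : q 3 = 0) (hp3 : 0 < p 2) (hq3 : 0 < q 2)
    (r R : ℝ) (hr : r = p 2 / Real.sqrt 2) (hR : R = q 2 / Real.sqrt 2)
    (horth : dist p q ^ 2 = r ^ 2 + R ^ 2) :
    Metric.sphere p r ∩ Metric.sphere (spinRot (Real.pi / 3) q) R =
      {(R / (r + R)) • p + (r / (r + R)) • spinRot (Real.pi / 3) q} := by
  have hr0 : 0 < r := hr ▸ by positivity
  have hR0 : 0 < R := hR ▸ by positivity
  have hpq : p 2 * q 2 = 2 * r * R := by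
    rw [hr, hR]
    field_simp
    rw [Real.sq_sqrt zero_le_two]
  have hd : dist p (spinRot (Real.pi / 3) q) = r + R := by
    rw [← pow_left_inj₀ dist_nonneg (by positivity) two_ne_zero, dist_spinRot_sq hp4 hq4,
      horth, Real.cos_pi_div_three]
    linear_combination hpq
  rw [sphere_inter_sphere_eq_singleton_of_dist_eq_add hr0.le hR0.le hd, lineMap_apply_module,
    one_sub_div (by positivity), add_sub_cancel_left]
end

section
/- Let F₂ = FreeGroup (Fin 2) be the free group on two generators a, b, and let ψ : F₂ ≃* F₂ be the automorphism determined by ψ(a) = b⁻¹ and ψ(b) = a·b. Then ψ⁶ is an inner automorphism of F₂, while ψᵏ is not inner for each k = 1, 2, 3, 4, 5. In other words, the image of ψ in the outer automorphism group Out(F₂) has order exactly six. -/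
/-!
Inner automorphisms act trivially on the abelianization `ℤ²` of `F₂`, where `ψ` acts by
`(x, y) ↦ (y, y - x)`, a rotation of order six; so `ψᵏ` is not inner for `0 < k < 6`.
Conversely, `ψ³` is `conj b⁻¹` composed with the involution `a ↦ a⁻¹, b ↦ a⁻¹b⁻¹a`, hence
`ψ⁶ = conj (b⁻¹a⁻¹ba)`.
-/

theorem MulAut.freeGroup_ext {α : Type*} {σ τ : MulAut (FreeGroup α)}
    (h : ∀ a, σ (FreeGroup.of a) = τ (FreeGroup.of a)) : σ = τ :=
  MulEquiv.toMonoidHom_injective (FreeGroup.ext_hom _ _ h)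

theorem MonoidHom.map_conj_apply {G M : Type*} [Group G] [CommGroup M] (f : G →* M)
    (g x : G) : f (MulAut.conj g x) = f x := by
  rw [MulAut.conj_apply, map_mul, map_mul, map_inv, mul_inv_cancel_comm]

theorem MonoidHom.not_exists_eq_conj_of_map_ne {G M : Type*} [Group G] [CommGroup M]
    (f : G →* M) {σ : MulAut G} {x : G} (h : f (σ x) ≠ f x) :
    ¬∃ g, σ = MulAut.conj g := by
  rintro ⟨g, rfl⟩
  exact h (f.map_conj_apply g x)

namespace TrefoilMonodromy

open FreeGroup (of)
open Multiplicative

def exponentSums : FreeGroup (Fin 2) →* Multiplicative (ℤ × ℤ) :=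
  FreeGroup.lift ![ofAdd (1, 0), ofAdd (0, 1)]

def homologyAction : Multiplicative (ℤ × ℤ) →* Multiplicative (ℤ × ℤ) :=
  AddMonoidHom.toMultiplicative
    ((AddMonoidHom.snd ℤ ℤ).prod (AddMonoidHom.snd ℤ ℤ - AddMonoidHom.fst ℤ ℤ))

theorem homologyAction_iterate_ne {k : ℕ} (hk1 : 1 ≤ k) (hk5 : k ≤ 5) :
    homologyAction^[k] (ofAdd (1, 0)) ≠ ofAdd (1, 0) := by
  interval_cases k <;> decide

variable {ψ : MulAut (FreeGroup (Fin 2))}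

theorem exponentSums_map (ha : ψ (of 0) = (of 1)⁻¹) (hb : ψ (of 1) = of 0 * of 1)
    (x : FreeGroup (Fin 2)) : exponentSums (ψ x) = homologyAction (exponentSums x) := by
  have on_generators : ∀ i, (exponentSums.comp ψ.toMonoidHom) (of i) =
      (homologyAction.comp exponentSums) (of i) := by
    intro i
    fin_cases i
    · change exponentSums (ψ (of 0)) = homologyAction (exponentSums (of 0))
      rw [ha]
      rfl
    · change exponentSums (ψ (of 1)) = homologyAction (exponentSums (of 1))
      rw [hb]
      rfl
  exact DFunLike.congr_fun (FreeGroup.ext_hom _ _ on_generators) x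

theorem exponentSums_pow_apply (ha : ψ (of 0) = (of 1)⁻¹) (hb : ψ (of 1) = of 0 * of 1)
    (k : ℕ) (x : FreeGroup (Fin 2)) :
    exponentSums ((ψ ^ k) x) = homologyAction^[k] (exponentSums x) := by
  induction k with
  | zero => rfl
  | succ k ih =>
    rw [pow_succ', MulAut.mul_apply, exponentSums_map ha hb, ih,
      Function.iterate_succ_apply']

theorem pow_three_apply_of_zero (ha : ψ (of 0) = (of 1)⁻¹) (hb : ψ (of 1) = of 0 * of 1) :
    (ψ ^ 3) (of 0) = (of 1)⁻¹ * (of 0)⁻¹ * of 1 := by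
  simp only [pow_three, MulAut.mul_apply, ha, hb, map_inv, map_mul]
  group

theorem pow_three_apply_of_one (ha : ψ (of 0) = (of 1)⁻¹) (hb : ψ (of 1) = of 0 * of 1) :
    (ψ ^ 3) (of 1) = (of 1)⁻¹ * (of 0)⁻¹ * (of 1)⁻¹ * of 0 * of 1 := by
  simp only [pow_three, MulAut.mul_apply, ha, hb, map_inv, map_mul]
  group

theorem pow_six_eq_conj (ha : ψ (of 0) = (of 1)⁻¹) (hb : ψ (of 1) = of 0 * of 1) :
    ψ ^ 6 = MulAut.conj ((of 1)⁻¹ * (of 0)⁻¹ * of 1 * of 0) := by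
  refine MulAut.freeGroup_ext fun i => ?_
  rw [show ψ ^ 6 = ψ ^ 3 * ψ ^ 3 by rw [← pow_add], MulAut.mul_apply, MulAut.conj_apply]
  fin_cases i <;>
    simp only [Fin.zero_eta, Fin.mk_one, pow_three_apply_of_zero ha hb,
      pow_three_apply_of_one ha hb, map_mul, map_inv] <;>
    group

end TrefoilMonodromy

/-- The trefoil monodromy `a ↦ b⁻¹`, `b ↦ ab` of the free group on two generators has order
exactly six in the outer automorphism group: `ψ⁶` is inner, while `ψᵏ` is not inner for
`k = 1, …, 5`. -/
theorem trefoil_monodromy_order_six_in_out (ψ : MulAut (FreeGroup (Fin 2)))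
    (ha : ψ (FreeGroup.of 0) = (FreeGroup.of 1)⁻¹)
    (hb : ψ (FreeGroup.of 1) = FreeGroup.of 0 * FreeGroup.of 1) :
    (∃ g : FreeGroup (Fin 2), ψ ^ 6 = MulAut.conj g) ∧
      ∀ k : ℕ, 1 ≤ k → k ≤ 5 → ¬∃ g : FreeGroup (Fin 2), ψ ^ k = MulAut.conj g := by
  refine ⟨⟨_, TrefoilMonodromy.pow_six_eq_conj ha hb⟩, fun k hk1 hk5 => ?_⟩
  refine TrefoilMonodromy.exponentSums.not_exists_eq_conj_of_map_ne (x := FreeGroup.of 0) ?_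
  rw [TrefoilMonodromy.exponentSums_pow_apply ha hb]
  exact TrefoilMonodromy.homologyAction_iterate_ne hk1 hk5
end

section
/- Let F₂ = FreeGroup (Fin 2) be the free group on two generators a, b, let ψ : F₂ ≃* F₂ be the automorphism determined by ψ(a) = b⁻¹, ψ(b) = a·b, and let φ : Multiplicative ℤ →* MulAut F₂ be the homomorphism sending the generator of ℤ to ψ. Then the semidirect product F₂ ⋊[φ] Multiplicative ℤ is isomorphic, as a group, to the presented group ⟨x, y | x·y·x = y·x·y⟩ (the trefoil knot group). -/
/-!
Writing `a, b` for the free generators and `t` for the generator of `ℤ`, the relation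
`t w t⁻¹ = ψ w` gives `t (b t) t = (a b) t³ = (b t) t (b t)`, since `ψ² b = b⁻¹ a b`; so
`x ↦ t, y ↦ b t` defines a map from the trefoil group. Conversely, `a ↦ y⁻¹ x, b ↦ y x⁻¹,
t ↦ x` respects the monodromy because the braid relation says `y⁻¹ x y = x y x⁻¹`, and the two
maps are mutually inverse on generators.
-/

/-- The relation `x·y·x·(y·x·y)⁻¹` presenting the trefoil knot group `⟨x, y | xyx = yxy⟩`. -/
def trefoilRels : Set (FreeGroup (Fin 2)) :=
  {FreeGroup.of 0 * FreeGroup.of 1 * FreeGroup.of 0 *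
    (FreeGroup.of 1 * FreeGroup.of 0 * FreeGroup.of 1)⁻¹}

open Function SemidirectProduct

theorem MulAut.semiconj_zpow {M N : Type*} [Monoid M] [Monoid N] {f : M → N} {σ : MulAut M}
    {τ : MulAut N} (h : Semiconj f σ τ) (k : ℤ) : Semiconj f ⇑(σ ^ k) ⇑(τ ^ k) := by
  induction k using Int.induction_on with
  | zero => exact Semiconj.id_right
  | succ k ih => rw [zpow_add_one, zpow_add_one]; exact ih.comp_right h
  | pred k ih =>
    rw [zpow_sub_one, zpow_sub_one]
    exact ih.comp_right (h.inverses_right σ.apply_inv_self τ.inv_apply_self)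

namespace SemidirectProduct

variable {N G H : Type*} [Group N] [Group G] [Group H]

theorem inr_mul_inl {φ : G →* MulAut N} (g : G) (n : N) :
    (inr g * inl n : N ⋊[φ] G) = inl (φ g n) * inr g := by
  rw [inl_aut, map_inv, inv_mul_cancel_right]

theorem inr_ofAdd_one_mul_inl (ψ : MulAut N) (n : N) :
    (inr (Multiplicative.ofAdd 1) * inl n : N ⋊[zpowersHom _ ψ] Multiplicative ℤ) =
      inl (ψ n) * inr (Multiplicative.ofAdd 1) := by
  rw [inr_mul_inl, zpowersHom_apply, toAdd_ofAdd, zpow_one]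

def liftZPowers (ψ : MulAut N) (f : N →* H) (t : H)
    (h : f.comp ψ.toMonoidHom = (MulAut.conj t).toMonoidHom.comp f) :
    N ⋊[zpowersHom _ ψ] Multiplicative ℤ →* H :=
  lift f (zpowersHom H t) fun g => by
    have hsemi : Semiconj f ψ (MulAut.conj t) := fun n => DFunLike.congr_fun h n
    ext n
    simpa [← map_zpow] using MulAut.semiconj_zpow hsemi (Multiplicative.toAdd g) n

@[simp]
theorem liftZPowers_inl (ψ : MulAut N) (f : N →* H) (t : H)
    (h : f.comp ψ.toMonoidHom = (MulAut.conj t).toMonoidHom.comp f) (n : N) :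
    liftZPowers ψ f t h (inl n) = f n :=
  lift_inl ..

@[simp]
theorem liftZPowers_inr (ψ : MulAut N) (f : N →* H) (t : H)
    (h : f.comp ψ.toMonoidHom = (MulAut.conj t).toMonoidHom.comp f) (k : ℤ) :
    liftZPowers ψ f t h (inr (Multiplicative.ofAdd k)) = t ^ k := by
  simp [liftZPowers]

end SemidirectProduct

section Trefoil

variable {H : Type*} [Group H]

theorem PresentedGroup.trefoil_braid_relation :
    (PresentedGroup.of 0 * PresentedGroup.of 1 * PresentedGroup.of 0 :
      PresentedGroup trefoilRels) =
      PresentedGroup.of 1 * PresentedGroup.of 0 * PresentedGroup.of 1 := by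
  have h := PresentedGroup.one_of_mem (rels := trefoilRels) rfl
  simp only [map_mul, map_inv] at h
  exact mul_inv_eq_one.mp h

def trefoilLift (x y : H) (hxy : x * y * x = y * x * y) : PresentedGroup trefoilRels →* H :=
  PresentedGroup.toGroup (f := ![x, y]) <| by
    rintro r rfl
    simp [hxy]

@[simp]
theorem trefoilLift_of_zero (x y : H) (hxy : x * y * x = y * x * y) :
    trefoilLift x y hxy (PresentedGroup.of 0) = x :=
  PresentedGroup.toGroup.of _

@[simp]
theorem trefoilLift_of_one (x y : H) (hxy : x * y * x = y * x * y) :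
    trefoilLift x y hxy (PresentedGroup.of 1) = y :=
  PresentedGroup.toGroup.of _

theorem conj_eq_of_braid {x y : H} (hxy : x * y * x = y * x * y) : y⁻¹ * x * y = x * y * x⁻¹ :=
  calc y⁻¹ * x * y = y⁻¹ * (x * y * x) * x⁻¹ := by group
    _ = y⁻¹ * (y * x * y) * x⁻¹ := by rw [hxy]
    _ = x * y * x⁻¹ := by group

variable (ψ : MulAut (FreeGroup (Fin 2)))

theorem FreeGroup.lift_comp_monodromy (ha : ψ (FreeGroup.of 0) = (FreeGroup.of 1)⁻¹)
    (hb : ψ (FreeGroup.of 1) = FreeGroup.of 0 * FreeGroup.of 1)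
    {x y : H} (hxy : x * y * x = y * x * y) :
    (FreeGroup.lift ![y⁻¹ * x, y * x⁻¹]).comp ψ.toMonoidHom =
      (MulAut.conj x).toMonoidHom.comp (FreeGroup.lift ![y⁻¹ * x, y * x⁻¹]) := by
  refine FreeGroup.ext_hom _ _ (Fin.forall_fin_two.mpr ⟨?_, ?_⟩) <;>
    simp only [MonoidHom.comp_apply, MulEquiv.toMonoidHom_eq_coe, MonoidHom.coe_coe,
      MulAut.conj_apply, ha, hb, _root_.map_inv, _root_.map_mul, FreeGroup.lift_apply_of,
      Matrix.cons_val_zero, Matrix.cons_val_one, Matrix.cons_val_fin_one]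
  · group
  · calc y⁻¹ * x * (y * x⁻¹) = y⁻¹ * x * y * x⁻¹ := by group
      _ = _ := by rw [conj_eq_of_braid hxy]; group

theorem SemidirectProduct.monodromy_braid_relation
    (ha : ψ (FreeGroup.of 0) = (FreeGroup.of 1)⁻¹)
    (hb : ψ (FreeGroup.of 1) = FreeGroup.of 0 * FreeGroup.of 1) :
    (inr (Multiplicative.ofAdd 1) * (inl (FreeGroup.of 1) * inr (Multiplicative.ofAdd 1)) *
        inr (Multiplicative.ofAdd 1) : FreeGroup (Fin 2) ⋊[zpowersHom _ ψ] Multiplicative ℤ) =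
      inl (FreeGroup.of 1) * inr (Multiplicative.ofAdd 1) * inr (Multiplicative.ofAdd 1) *
        (inl (FreeGroup.of 1) * inr (Multiplicative.ofAdd 1)) := by
  have hmove (n : FreeGroup (Fin 2)) (w : FreeGroup (Fin 2) ⋊[zpowersHom _ ψ] Multiplicative ℤ) :
      inr (Multiplicative.ofAdd 1) * (inl n * w) =
        inl (ψ n) * (inr (Multiplicative.ofAdd 1) * w) := by
    rw [← mul_assoc, inr_ofAdd_one_mul_inl, mul_assoc]
  simp only [mul_assoc, hmove, ha, hb, map_mul, map_inv, mul_inv_cancel_left]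

def monodromyToTrefoil (ha : ψ (FreeGroup.of 0) = (FreeGroup.of 1)⁻¹)
    (hb : ψ (FreeGroup.of 1) = FreeGroup.of 0 * FreeGroup.of 1) :
    FreeGroup (Fin 2) ⋊[zpowersHom _ ψ] Multiplicative ℤ →* PresentedGroup trefoilRels :=
  liftZPowers ψ _ _ (FreeGroup.lift_comp_monodromy ψ ha hb PresentedGroup.trefoil_braid_relation)

def trefoilToMonodromy (ha : ψ (FreeGroup.of 0) = (FreeGroup.of 1)⁻¹)
    (hb : ψ (FreeGroup.of 1) = FreeGroup.of 0 * FreeGroup.of 1) :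
    PresentedGroup trefoilRels →* FreeGroup (Fin 2) ⋊[zpowersHom _ ψ] Multiplicative ℤ :=
  trefoilLift _ _ (SemidirectProduct.monodromy_braid_relation ψ ha hb)

theorem trefoilToMonodromy_comp_monodromyToTrefoil
    (ha : ψ (FreeGroup.of 0) = (FreeGroup.of 1)⁻¹)
    (hb : ψ (FreeGroup.of 1) = FreeGroup.of 0 * FreeGroup.of 1) :
    (trefoilToMonodromy ψ ha hb).comp (monodromyToTrefoil ψ ha hb) = MonoidHom.id _ := by
  refine SemidirectProduct.hom_ext (FreeGroup.ext_hom _ _ (Fin.forall_fin_two.mpr ⟨?_, ?_⟩)) ?_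
  · simp only [trefoilToMonodromy, monodromyToTrefoil, MonoidHom.comp_apply, MonoidHom.id_apply,
      liftZPowers_inl, FreeGroup.lift_apply_of, Matrix.cons_val_zero, map_mul, map_inv, mul_inv_rev,
      trefoilLift_of_zero, trefoilLift_of_one]
    rw [mul_assoc, inv_mul_eq_iff_eq_mul, inr_ofAdd_one_mul_inl, ha, map_inv]
  · simp [monodromyToTrefoil, trefoilToMonodromy]
  · refine MonoidHom.ext_mint ?_
    simp [monodromyToTrefoil, trefoilToMonodromy]

theorem monodromyToTrefoil_comp_trefoilToMonodromy
    (ha : ψ (FreeGroup.of 0) = (FreeGroup.of 1)⁻¹)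
    (hb : ψ (FreeGroup.of 1) = FreeGroup.of 0 * FreeGroup.of 1) :
    (monodromyToTrefoil ψ ha hb).comp (trefoilToMonodromy ψ ha hb) = MonoidHom.id _ := by
  refine PresentedGroup.ext (Fin.forall_fin_two.mpr ⟨?_, ?_⟩) <;>
    simp [monodromyToTrefoil, trefoilToMonodromy]

end Trefoil

/-- The mapping-torus group of the trefoil monodromy: the semidirect product
`F₂ ⋊_ψ ℤ`, where `ψ(a) = b⁻¹`, `ψ(b) = ab`, is isomorphic to the trefoil knot group
`⟨x, y | xyx = yxy⟩`. -/
theorem semidirect_monodromy_iso_trefoil_group (ψ : MulAut (FreeGroup (Fin 2)))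
    (ha : ψ (FreeGroup.of 0) = (FreeGroup.of 1)⁻¹)
    (hb : ψ (FreeGroup.of 1) = FreeGroup.of 0 * FreeGroup.of 1)
    (φ : Multiplicative ℤ →* MulAut (FreeGroup (Fin 2)))
    (hφ : φ (Multiplicative.ofAdd 1) = ψ) :
    Nonempty ((FreeGroup (Fin 2) ⋊[φ] Multiplicative ℤ) ≃* PresentedGroup trefoilRels) := by
  obtain rfl : φ = zpowersHom _ ψ := by
    rw [← hφ, ← zpowersHom_symm_apply, Equiv.apply_symm_apply]
  exact ⟨(monodromyToTrefoil ψ ha hb).toMulEquiv (trefoilToMonodromy ψ ha hb)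
    (trefoilToMonodromy_comp_monodromyToTrefoil ψ ha hb)
    (monodromyToTrefoil_comp_trefoilToMonodromy ψ ha hb)⟩
end

section
/- Let G be the group with presentation whose generators are x and yᵢ for i ∈ ℕ, and whose relations are x·yᵢ·x = yᵢ·x·yᵢ for every i ∈ ℕ. Then G is not finitely generated. -/
/-- The relations `x·yᵢ·x = yᵢ·x·yᵢ`, one for each `i : ℕ`, on the generating set
`Option ℕ`, where `none` is the generator `x` and `some i` is the generator `yᵢ`. -/
def wildTrefoilRels : Set (FreeGroup (Option ℕ)) :=
  Set.range fun i : ℕ =>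
    FreeGroup.of none * FreeGroup.of (some i) * FreeGroup.of none *
      (FreeGroup.of (some i) * FreeGroup.of none * FreeGroup.of (some i))⁻¹

/-!
The subgroups `Gₙ = ⟨x, y₀, …, yₙ₋₁⟩` form an increasing chain exhausting the group, so a
finitely generated group would equal some `Gₙ`. But sending `x` and `yᵢ` (`i < n`) to the
transposition `(0 1)` of `S₃` and the remaining `yᵢ` to `(1 2)` respects the braid relations,
and maps `Gₙ` into the stabiliser of `2` while `yₙ` moves `2`; hence `yₙ ∉ Gₙ`.
-/

theorem Group.FG.exists_eq_top_of_directed {G ι : Type*} [Group G] [Nonempty ι]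
    (hG : Group.FG G) {H : ι → Subgroup G} (hdir : Directed (· ≤ ·) H) (hsup : ⨆ i, H i = ⊤) :
    ∃ i, H i = ⊤ := by
  classical
  obtain ⟨S, hS⟩ := hG.out
  have hcover (g : G) : ∃ i, g ∈ H i :=
    (Subgroup.mem_iSup_of_directed hdir).1 (hsup ▸ Subgroup.mem_top g)
  choose idx hidx using hcover
  obtain ⟨j, hj⟩ := hdir.finset_le (S.image idx)
  refine ⟨j, eq_top_iff.2 (hS ▸ (Subgroup.closure_le _).2 fun g hg => ?_)⟩
  exact hj _ (Finset.mem_image_of_mem idx hg) (hidx g)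

namespace WildTrefoil

open Equiv

section Lift

variable {H : Type*} [Group H] (a : H) (b : ℕ → H) (hab : ∀ i, a * b i * a = b i * a * b i)

def lift : PresentedGroup wildTrefoilRels →* H :=
  PresentedGroup.toGroup (f := fun o => o.elim a b) <| by
    rintro _ ⟨i, rfl⟩
    simp [hab]

@[simp]
lemma lift_of_none : lift a b hab (PresentedGroup.of none) = a :=
  PresentedGroup.toGroup.of _

@[simp]
lemma lift_of_some (i : ℕ) : lift a b hab (PresentedGroup.of (some i)) = b i :=
  PresentedGroup.toGroup.of _

end Lift

def lowerSubgroup (N : ℕ) : Subgroup (PresentedGroup wildTrefoilRels) :=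
  Subgroup.closure (PresentedGroup.of '' {o | ∀ i ∈ o, i < N})

lemma lowerSubgroup_mono : Monotone lowerSubgroup := fun _ _ hMN =>
  Subgroup.closure_mono <| Set.image_mono fun _ ho i hi => (ho i hi).trans_le hMN

lemma iSup_lowerSubgroup : ⨆ N, lowerSubgroup N = ⊤ := by
  rw [eq_top_iff, ← PresentedGroup.closure_range_of, Subgroup.closure_le]
  rintro _ ⟨o, rfl⟩
  refine Subgroup.mem_iSup_of_mem (o.elim 0 (· + 1)) (Subgroup.subset_closure ⟨o, ?_, rfl⟩)
  rintro i rfl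
  exact Nat.lt_succ_self i

def toPerm (N : ℕ) : PresentedGroup wildTrefoilRels →* Perm (Fin 3) :=
  lift (swap 0 1) (fun i => if i < N then swap 0 1 else swap 1 2) fun i => by
    split_ifs <;> decide

lemma toPerm_of_of_forall_lt {N : ℕ} {o : Option ℕ} (ho : ∀ i ∈ o, i < N) :
    toPerm N (PresentedGroup.of o) = swap 0 1 := by
  cases o with
  | none => exact lift_of_none ..
  | some i => exact (lift_of_some ..).trans (if_pos (ho i rfl))

lemma toPerm_of_some_self (N : ℕ) : toPerm N (PresentedGroup.of (some N)) = swap 1 2 :=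
  (lift_of_some ..).trans (if_neg (lt_irrefl N))

lemma lowerSubgroup_le_comap_stabilizer (N : ℕ) :
    lowerSubgroup N ≤ (MulAction.stabilizer (Perm (Fin 3)) (2 : Fin 3)).comap (toPerm N) := by
  rw [lowerSubgroup, Subgroup.closure_le]
  rintro _ ⟨o, ho, rfl⟩
  rw [SetLike.mem_coe, Subgroup.mem_comap, MulAction.mem_stabilizer_iff,
    toPerm_of_of_forall_lt ho]
  decide

lemma of_some_notMem_lowerSubgroup (N : ℕ) : PresentedGroup.of (some N) ∉ lowerSubgroup N := by
  intro h
  have h2 := lowerSubgroup_le_comap_stabilizer N h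
  rw [Subgroup.mem_comap, MulAction.mem_stabilizer_iff, toPerm_of_some_self] at h2
  exact absurd h2 (by decide)

end WildTrefoil

/-- The group `⟨x, y₀, y₁, … | x·yᵢ·x = yᵢ·x·yᵢ (i ∈ ℕ)⟩`, the fundamental group of the
complement of the wild spun trefoil, is not finitely generated. -/
theorem wildTrefoilGroup_not_finitely_generated :
    ¬ Group.FG (PresentedGroup wildTrefoilRels) := fun hFG => by
  obtain ⟨N, hN⟩ :=
    hFG.exists_eq_top_of_directed WildTrefoil.lowerSubgroup_mono.directed_le
      WildTrefoil.iSup_lowerSubgroup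
  exact WildTrefoil.of_some_notMem_lowerSubgroup N (hN ▸ Subgroup.mem_top _)
end
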